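/- arXiv:1108.5927 — 3 statements merged into one kernel-verified Lean document; each statement's English description precedes it below -/
import Mathlib

section
/- (Kunugui–Novikov) Let P be a Polish space with a countable base {Vₙ}ₙ∈ℕ for its topology, and let T be a standard Borel space. Let B ⊆ P × T be a Borel set such that for every t ∈ T the section {p ∈ P : (p,t) ∈ B} is open in P. Then there exists a sequence {Bₙ}ₙ∈ℕ of Borel subsets of T such that B = ⋃ₙ (Vₙ × Bₙ). -/
/-!
Let `C n` be the projection to `T` of `(V n × T) \ B`, an analytic set. Since the sections of
`B` are open, `B` is covered by the rectangles `V n × (C n)ᶜ`, each contained in `B`. Novikov's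
separation theorem (countably many analytic sets with empty intersection have Borel supersets
with empty intersection) applied to `B` and the complements of these rectangles shrinks them to
Borel sets `E n` still covering `B`; Lusin separation of the projection of `E n` from `C n` then
gives `Bn n`.

Novikov's theorem is proved like Lusin's: if the ranges of `f n : ℕ^ℕ → α` are not separable,
one refines cylinders coordinate by coordinate keeping the images non-separable; the limit points
`y n` must have distinct images `f 0 (y 0) ≠ f a (y a)`, and disjoint neighbourhoods of these
separate the images of small enough cylinders.
-/

open MeasureTheory Set Function PiNat TopologicalSpace Topology

section MeasurablySeparableFamily

variable {α : Type*} [MeasurableSpace α]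

def MeasurablySeparableFamily (s : ℕ → Set α) : Prop :=
  ∃ u : ℕ → Set α, (∀ n, s n ⊆ u n) ∧ ⋂ n, u n = ∅ ∧ ∀ n, MeasurableSet (u n)

namespace MeasurablySeparableFamily

variable {s : ℕ → Set α}

theorem of_eq_empty {i : ℕ} (hi : s i = ∅) : MeasurablySeparableFamily s := by
  refine ⟨update (fun _ => univ) i ∅, fun n => ?_,
    eq_empty_of_subset_empty (iInter_subset_of_subset i (by simp)), fun n => ?_⟩ <;>
  rcases eq_or_ne n i with rfl | hn <;> simp [*]

theorem of_subset_of_disjoint {i j : ℕ} {u v : Set α} (hu : MeasurableSet u) (hv : MeasurableSet v)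
    (huv : Disjoint u v) (hsu : s i ⊆ u) (hsv : s j ⊆ v) : MeasurablySeparableFamily s := by
  refine ⟨fun n => (if n = i then u else univ) ∩ (if n = j then v else univ), fun n => ?_, ?_,
    fun n => ?_⟩
  · dsimp only
    split_ifs with hi hj <;> subst_vars <;> simp [*]
  · refine eq_empty_of_subset_empty fun x hx => huv.le_bot ⟨?_, ?_⟩
    · simpa using (mem_iInter.1 hx i).1
    · simpa using (mem_iInter.1 hx j).2
  · dsimp only
    split_ifs <;> simp [*]

theorem of_forall_update {m : ℕ} {g : ℕ → Set α} (hs : s m ⊆ ⋃ k, g k)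
    (hg : ∀ k, MeasurablySeparableFamily (update s m (g k))) : MeasurablySeparableFamily s := by
  choose u hsu hu hum using hg
  refine ⟨update (fun n => ⋂ k, u k n) m (⋃ k, u k m), fun n => ?_, ?_, fun n => ?_⟩
  · rcases eq_or_ne n m with rfl | hn
    · simpa using hs.trans (iUnion_mono fun k => by simpa using hsu k n)
    · simpa [hn] using fun k => by simpa [hn] using hsu k n
  · refine eq_empty_of_subset_empty fun x hx => ?_
    obtain ⟨k, hk⟩ := mem_iUnion.1 (by simpa using mem_iInter.1 hx m)
    rw [← hu k]
    refine mem_iInter.2 fun n => ?_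
    rcases eq_or_ne n m with rfl | hn
    · exact hk
    · have hxn := mem_iInter.1 hx n
      rw [update_of_ne hn] at hxn
      exact mem_iInter.1 hxn k
  · rcases eq_or_ne n m with rfl | hn
    · simpa using MeasurableSet.iUnion fun k => hum k n
    · simpa [hn] using MeasurableSet.iInter fun k => hum k n

end MeasurablySeparableFamily

end MeasurablySeparableFamily

namespace PiNat

variable {E : ℕ → Type*}

theorem mem_cylinder_of_le {x : ℕ → ∀ n, E n} {d : ℕ → ℕ} (hd : Monotone d)
    (hx : ∀ N, x (N + 1) ∈ cylinder (x N) (d N)) {N M : ℕ} (hNM : N ≤ M) :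
    x M ∈ cylinder (x N) (d N) := by
  induction M, hNM using Nat.le_induction with
  | base => exact self_mem_cylinder _ _
  | succ M hNM ih =>
    rw [← mem_cylinder_iff_eq.1 ih]
    exact cylinder_anti _ (hd hNM) (hx M)

theorem exists_forall_mem_cylinder {x : ℕ → ∀ n, E n} {d : ℕ → ℕ} (hd : Monotone d)
    (hx : ∀ N, x (N + 1) ∈ cylinder (x N) (d N)) (hd_unbounded : ∀ i, ∃ N, i < d N) :
    ∃ y, ∀ N, y ∈ cylinder (x N) (d N) := by
  choose M hM using hd_unbounded
  refine ⟨fun i => x (M i) i, fun N i hi => ?_⟩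
  rcases le_total N (M i) with hNM | hMN
  · exact mem_cylinder_of_le hd hx hNM i hi
  · exact (mem_cylinder_of_le hd hx hMN i (hM i)).symm

variable [∀ n, TopologicalSpace (E n)] [∀ n, DiscreteTopology (E n)]

theorem _root_.Continuous.exists_image_cylinder_subset {β : Type*} [TopologicalSpace β]
    {g : (∀ n, E n) → β} (hg : Continuous g) (x : ∀ n, E n) {u : Set β} (hu : u ∈ 𝓝 (g x)) :
    ∃ N, g '' cylinder x N ⊆ u := by
  obtain ⟨-, ⟨y, N, rfl⟩, hxy, hyu⟩ :=
    (isTopologicalBasis_cylinders E).mem_nhds_iff.1 (hg.continuousAt.preimage_mem_nhds hu)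
  exact ⟨N, image_subset_iff.2 (mem_cylinder_iff_eq.1 hxy ▸ hyu)⟩

end PiNat

section Novikov

variable {α : Type*} [MeasurableSpace α] (f : ℕ → (ℕ → ℕ) → α)

theorem exists_refine_cylinder_images {x : ℕ → ℕ → ℕ} {d : ℕ → ℕ}
    (h : ¬ MeasurablySeparableFamily fun n => f n '' cylinder (x n) (d n)) (m : ℕ) :
    ∃ x' : ℕ → ℕ → ℕ, (∀ n, x' n ∈ cylinder (x n) (d n)) ∧
      ¬ MeasurablySeparableFamily fun n => f n '' cylinder (x' n) (update d m (d m + 1) n) := by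
  by_contra! H
  refine h (.of_forall_update (m := m)
    (g := fun k => f m '' cylinder (update (x m) (d m) k) (d m + 1)) ?_ fun k => ?_)
  · rw [← image_iUnion, iUnion_cylinder_update (x m) (d m)]
  · have hx' : ∀ n, update x m (update (x m) (d m) k) n ∈ cylinder (x n) (d n) := fun n => by
      rcases eq_or_ne n m with rfl | hn
      · simpa using update_mem_cylinder _ _ _
      · simp [hn]
    convert H _ hx' using 2 with n
    rcases eq_or_ne n m with rfl | hn <;> simp [*]

theorem exists_refine_cylinder_images_lt {x : ℕ → ℕ → ℕ} {d : ℕ → ℕ}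
    (h : ¬ MeasurablySeparableFamily fun n => f n '' cylinder (x n) (d n)) (k : ℕ) :
    ∃ x' : ℕ → ℕ → ℕ, (∀ n, x' n ∈ cylinder (x n) (d n)) ∧
      ¬ MeasurablySeparableFamily fun n =>
        f n '' cylinder (x' n) (if n < k then d n + 1 else d n) := by
  induction k with
  | zero => exact ⟨x, fun n => self_mem_cylinder _ _, by simpa using h⟩
  | succ k ih =>
    obtain ⟨x', hxx', hx'⟩ := ih
    obtain ⟨x'', hx'x'', hx''⟩ := exists_refine_cylinder_images f hx' k
    refine ⟨x'', fun n => ?_, ?_⟩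
    · rw [← mem_cylinder_iff_eq.1 (hxx' n)]
      exact cylinder_anti _ (by split_ifs <;> omega) (hx'x'' n)
    · convert hx'' using 5 with n
      rcases lt_trichotomy n k with hn | rfl | hn <;> simp [update, *] <;> split_ifs <;> omega

theorem exists_forall_not_measurablySeparableFamily
    (h : ¬ MeasurablySeparableFamily fun n => range (f n)) :
    ∃ y : ℕ → ℕ → ℕ, ∀ N,
      ¬ MeasurablySeparableFamily fun n => f n '' cylinder (y n) (N - n) := by
  have step : ∀ N (x : ℕ → ℕ → ℕ),
      (¬ MeasurablySeparableFamily fun n => f n '' cylinder (x n) (N - n)) →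
      ∃ x' : ℕ → ℕ → ℕ, (∀ n, x' n ∈ cylinder (x n) (N - n)) ∧
        ¬ MeasurablySeparableFamily fun n => f n '' cylinder (x' n) (N + 1 - n) := by
    intro N x hx
    obtain ⟨x', hxx', hx'⟩ := exists_refine_cylinder_images_lt f hx (N + 1)
    refine ⟨x', hxx', ?_⟩
    convert hx' using 5 with n
    split_ifs <;> omega
  -- at stage `N` coordinate `n` has depth `N - n`: finitely many refinements per stage, and
  -- every depth tends to infinity
  choose! g hg_mem hg using step
  let x : ℕ → ℕ → ℕ → ℕ := fun N => N.rec (fun _ _ => 0) g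
  have hx : ∀ N, ¬ MeasurablySeparableFamily fun n => f n '' cylinder (x N n) (N - n) := by
    intro N
    induction N with
    | zero => simpa using h
    | succ N ih => exact hg N _ ih
  choose y hy using fun n => exists_forall_mem_cylinder (x := fun N => x N n)
    (d := fun N => N - n) (fun _ _ h => Nat.sub_le_sub_right h n)
    (fun N => hg_mem N _ (hx N) n) fun i => ⟨i + n + 1, by omega⟩
  refine ⟨y, fun N => ?_⟩
  simpa only [mem_cylinder_iff_eq.1 (hy _ N)] using hx N

theorem measurablySeparableFamily_range [TopologicalSpace α] [T2Space α] [OpensMeasurableSpace α]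
    (hf : ∀ n, Continuous (f n)) (h : ⋂ n, range (f n) = ∅) :
    MeasurablySeparableFamily fun n => range (f n) := by
  by_contra hns
  obtain ⟨y, hy⟩ := exists_forall_not_measurablySeparableFamily f hns
  obtain ⟨a, ha⟩ : ∃ a, f a (y a) ≠ f 0 (y 0) := by
    by_contra! hall
    exact (h ▸ mem_iInter.2 fun n => ⟨y n, hall n⟩ : f 0 (y 0) ∈ (∅ : Set α))
  obtain ⟨u, v, hu, hv, hyu, hyv, huv⟩ := t2_separation ha.symm
  obtain ⟨N₀, hN₀⟩ := (hf 0).exists_image_cylinder_subset (y 0) (hu.mem_nhds hyu)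
  obtain ⟨Nₐ, hNₐ⟩ := (hf a).exists_image_cylinder_subset (y a) (hv.mem_nhds hyv)
  refine hy (N₀ + Nₐ + a) (.of_subset_of_disjoint hu.measurableSet hv.measurableSet huv
    ((image_mono (cylinder_anti _ ?_)).trans hN₀) ((image_mono (cylinder_anti _ ?_)).trans hNₐ))
  all_goals omega

end Novikov

section Analytic

variable {α : Type*} [TopologicalSpace α]

theorem MeasureTheory.AnalyticSet.union {s t : Set α} (hs : AnalyticSet s) (ht : AnalyticSet t) :
    AnalyticSet (s ∪ t) := by
  rw [union_eq_iUnion]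
  exact AnalyticSet.iUnion (Bool.forall_bool.2 ⟨ht, hs⟩)

variable [T2Space α] [MeasurableSpace α] [OpensMeasurableSpace α]

/-- **Novikov's separation theorem**. -/
theorem MeasureTheory.AnalyticSet.measurablySeparableFamily {s : ℕ → Set α}
    (hs : ∀ n, AnalyticSet (s n)) (h : ⋂ n, s n = ∅) : MeasurablySeparableFamily s := by
  by_cases hempty : ∃ i, s i = ∅
  · obtain ⟨i, hi⟩ := hempty
    exact .of_eq_empty hi
  · have hrange : ∀ n, ∃ f : (ℕ → ℕ) → α, Continuous f ∧ range f = s n := fun n => by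
      have hsn := hs n
      rw [AnalyticSet] at hsn
      exact hsn.resolve_left (not_exists.1 hempty n)
    choose f hf hfs using hrange
    simpa only [hfs] using measurablySeparableFamily_range f hf (by simpa only [hfs] using h)

theorem MeasureTheory.AnalyticSet.exists_measurableSet_subset_of_subset_iUnion {s : Set α}
    (hs : AnalyticSet s) {K : ℕ → Set α} (hK : ∀ n, AnalyticSet (K n)ᶜ) (hsK : s ⊆ ⋃ n, K n) :
    ∃ E : ℕ → Set α, (∀ n, MeasurableSet (E n)) ∧ (∀ n, E n ⊆ K n) ∧ s ⊆ ⋃ n, E n := by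
  let A : ℕ → Set α := fun n => n.casesOn s fun n => (K n)ᶜ
  have hA : ⋂ n, A n = ∅ := eq_empty_of_forall_notMem fun x hx => by
    obtain ⟨n, hn⟩ := mem_iUnion.1 (hsK (mem_iInter.1 hx 0))
    exact mem_iInter.1 hx (n + 1) hn
  obtain ⟨u, hAu, hu, hum⟩ := AnalyticSet.measurablySeparableFamily (s := A)
    (fun n => n.casesOn hs hK) hA
  refine ⟨fun n => (u (n + 1))ᶜ, fun n => (hum _).compl,
    fun n => compl_subset_comm.1 (hAu (n + 1)), fun x hx => ?_⟩
  obtain ⟨_ | n, hn⟩ : ∃ n, x ∉ u n := by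
    simpa only [mem_iInter, not_forall] using (hu ▸ notMem_empty x : x ∉ ⋂ n, u n)
  · exact absurd (hAu 0 hx) hn
  · exact mem_iUnion.2 ⟨n, hn⟩

end Analytic

section Sections

variable {P T : Type*}

theorem prod_compl_image_snd_diff_subset (s : Set P) (B : Set (P × T)) :
    s ×ˢ (Prod.snd '' (s ×ˢ univ \ B))ᶜ ⊆ B := by
  rintro ⟨p, t⟩ ⟨hp, ht⟩
  by_contra hB
  exact ht ⟨(p, t), ⟨⟨hp, trivial⟩, hB⟩, rfl⟩

theorem subset_iUnion_prod_compl_image_snd_diff [TopologicalSpace P] {V : ℕ → Set P}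
    (hV : IsTopologicalBasis (range V)) {B : Set (P × T)}
    (hsec : ∀ t : T, IsOpen {p : P | (p, t) ∈ B}) :
    B ⊆ ⋃ n, V n ×ˢ (Prod.snd '' (V n ×ˢ univ \ B))ᶜ := by
  rintro ⟨p, t⟩ hpt
  obtain ⟨_, ⟨n, rfl⟩, hpn, hnB⟩ := hV.exists_subset_of_mem_open hpt (hsec t)
  refine mem_iUnion.2 ⟨n, hpn, ?_⟩
  rintro ⟨⟨q, _⟩, ⟨⟨hq, -⟩, hqB⟩, rfl⟩
  exact hqB (hnB hq)

end Sections

/-- **Kunugui–Novikov theorem.** Let `P` be a Polish space with a countable base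
`{V n}` of its topology and let `T` be a standard Borel space. If `B ⊆ P × T` is a
Borel set all of whose sections `{p | (p, t) ∈ B}` are open in `P`, then there is a
sequence `{B n}` of Borel subsets of `T` such that `B = ⋃ n, V n × B n`. -/
theorem kunugui_novikov
    {P : Type*} [TopologicalSpace P] [PolishSpace P] [MeasurableSpace P] [BorelSpace P]
    {T : Type*} [MeasurableSpace T] [StandardBorelSpace T]
    (V : ℕ → Set P) (hV : TopologicalSpace.IsTopologicalBasis (Set.range V))
    (B : Set (P × T)) (hB : MeasurableSet B)
    (hsec : ∀ t : T, IsOpen {p : P | (p, t) ∈ B}) :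
    ∃ Bn : ℕ → Set T, (∀ n, MeasurableSet (Bn n)) ∧
      B = ⋃ n, (V n) ×ˢ (Bn n) := by
  let := upgradeStandardBorel T
  set C : ℕ → Set T := fun n => Prod.snd '' (V n ×ˢ univ \ B)
  have hVo : ∀ n, IsOpen (V n) := fun n => hV.isOpen (mem_range_self n)
  have hC : ∀ n, AnalyticSet (C n) := fun n =>
    (((hVo n).measurableSet.prod .univ).diff hB).analyticSet.image_of_continuous continuous_snd
  obtain ⟨E, hEm, hEC, hBE⟩ := hB.analyticSet.exists_measurableSet_subset_of_subset_iUnion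
    (fun n => by
      rw [compl_prod_eq_union, compl_compl, univ_prod]
      exact ((hVo n).isClosed_compl.prod isClosed_univ).analyticSet.union
        ((hC n).preimage continuous_snd))
    (subset_iUnion_prod_compl_image_snd_diff hV hsec)
  have hsep : ∀ n, MeasurablySeparable (Prod.snd '' E n) (C n) := fun n => by
    have hEC' : Prod.snd '' E n ⊆ (C n)ᶜ := image_subset_iff.2 fun x hx => (hEC n hx).2
    exact ((hEm n).analyticSet.image_of_continuous continuous_snd).measurablySeparable (hC n)
      (disjoint_compl_left.mono_left hEC')
  choose Bn hEB hCB hBm using hsep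
  refine ⟨Bn, hBm, (hBE.trans (iUnion_mono fun n x hx => ?_)).antisymm (iUnion_subset fun n => ?_)⟩
  · exact ⟨(hEC n hx).1, hEB n ⟨x, hx, rfl⟩⟩
  · exact (prod_mono_right (hCB n).subset_compl_left).trans (prod_compl_image_snd_diff_subset _ B)
end

section
/- (Takesaki selection theorem, Borel version) Let R be an equivalence relation on a Polish space X such that every equivalence class is a closed subset of X, and such that the R-saturation of every open subset of X is a Borel set. Then there exists a Borel subset of X meeting every equivalence class in exactly one point. -/
/-!
Fix countably many open balls `B n` that form a basis with arbitrarily small closures inside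
any open set. For each `x`, choose greedily the least `n₀` whose ball meets the class of `x`,
then the least `n₁` whose ball meets the class, has closure inside `B n₀` and diameter at
most `1`, and so on with diameters at most `2⁻ᵏ`. The choice only sees the saturations of the
balls, so the indices are constant on classes and Borel in `x`. By completeness, the closed
class meets `⋂ₖ B nₖ` in exactly one point, which is then the unique point of the class
lying in `{x | ∀ k, x ∈ B (nₖ x)}`.
-/

open Metric Filter Topology TopologicalSpace Bornology

theorem Nat.sInf_eq_iff {s : Set ℕ} {m : ℕ} :
    sInf s = m ↔ (m ∈ s ∧ ∀ j < m, j ∉ s) ∨ (m = 0 ∧ s = ∅) := by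
  rcases s.eq_empty_or_nonempty with rfl | hne
  · simp [eq_comm]
  · rw [csInf_eq_iff hne]
    simp only [hne.ne_empty, and_false, or_false]
    exact and_congr_right fun _ => ⟨fun h j hj hjs => (h j hjs).not_gt hj,
      fun h a ha => not_lt.1 fun hlt => h a hlt ha⟩

section Measurability

variable {α : Type*} [MeasurableSpace α]

theorem measurable_sInf_setOf {p : ℕ → α → Prop} (hp : ∀ n, Measurable (p n)) :
    Measurable fun x => sInf {n | p n x} := by
  refine measurable_to_countable' fun m => ?_
  simp only [Set.preimage, Set.mem_singleton_iff, Nat.sInf_eq_iff, Set.eq_empty_iff_forall_notMem]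
  exact Measurable.setOf (by fun_prop)

theorem measurable_mem_apply {f : α → ℕ} (hf : Measurable f) {B : ℕ → Set α}
    (hB : ∀ n, MeasurableSet (B n)) : Measurable fun x => x ∈ B (f x) := by
  have : (fun x => x ∈ B (f x)) = fun x => ∃ n, f x = n ∧ x ∈ B n := by
    ext x
    simp
  rw [this]
  exact .exists fun n => (hf.eq_const n).and (hB n).mem

end Measurability

section Greedy

variable {α : Type*} (C : ℕ → ℕ → ℕ → Prop) (A : ℕ → Set α)

-- Where no admissible index exists, the value is the junk `sInf ∅ = 0`.
noncomputable def greedySeq (x : α) : ℕ → ℕ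
  | 0 => sInf {n | x ∈ A n}
  | k + 1 => sInf {n | C k (greedySeq x k) n ∧ x ∈ A n}

variable {C A}

theorem greedySeq_congr {x y : α} (h : ∀ n, x ∈ A n ↔ y ∈ A n) :
    greedySeq C A x = greedySeq C A y := by
  funext k
  induction k with
  | zero => simp only [greedySeq, h]
  | succ k ih => simp only [greedySeq, h, ih]

theorem measurable_greedySeq [MeasurableSpace α] (hA : ∀ n, MeasurableSet (A n)) (k : ℕ) :
    Measurable fun x => greedySeq C A x k := by
  induction k with
  | zero => exact measurable_sInf_setOf fun n => (hA n).mem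
  | succ k ih =>
    exact measurable_sInf_setOf fun n =>
      ((Measurable.of_discrete (f := fun m => C k m n)).comp ih).and (hA n).mem

section Spec

variable {x : α} (h₀ : ∃ n, x ∈ A n) (hstep : ∀ k m, x ∈ A m → ∃ n, C k m n ∧ x ∈ A n)
include h₀ hstep

theorem mem_greedySeq (k : ℕ) : x ∈ A (greedySeq C A x k) := by
  induction k with
  | zero => exact Nat.sInf_mem h₀
  | succ k ih => exact (Nat.sInf_mem (hstep k _ ih)).2

theorem greedySeq_succ (k : ℕ) : C k (greedySeq C A x k) (greedySeq C A x (k + 1)) :=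
  (Nat.sInf_mem (hstep k _ (mem_greedySeq h₀ hstep k))).1

end Spec

end Greedy

theorem exists_nat_basis_closure_subset_diam_le (X : Type*) [PseudoMetricSpace X]
    [SeparableSpace X] :
    ∃ B : ℕ → Set X, (∀ n, IsOpen (B n)) ∧ (∀ n, IsBounded (B n)) ∧
      ∀ y O, IsOpen O → y ∈ O → ∀ ε > 0, ∃ n, y ∈ B n ∧ closure (B n) ⊆ O ∧ diam (B n) ≤ ε := by
  rcases isEmpty_or_nonempty X with hX | hX
  · exact ⟨fun _ => ∅, fun _ => isOpen_empty, fun _ => isBounded_empty,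
      fun y => isEmptyElim y⟩
  let u := denseSeq X
  refine ⟨fun n => ball (u n.unpair.1) (1 / (n.unpair.2 + 1)), fun _ => isOpen_ball,
    fun _ => isBounded_ball, fun y O hO hy ε hε => ?_⟩
  obtain ⟨δ, hδ, hδO⟩ := Metric.isOpen_iff.1 hO y hy
  obtain ⟨j, hj⟩ := exists_nat_one_div_lt (lt_min (half_pos hδ) (half_pos hε))
  set r : ℝ := 1 / (j + 1)
  obtain ⟨i, hi⟩ := (denseRange_denseSeq X).exists_dist_lt y (ε := r) (by positivity)
  refine ⟨Nat.pair i j, ?_, ?_, ?_⟩ <;> simp only [Nat.unpair_pair]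
  · exact mem_ball.2 hi
  · refine closure_ball_subset_closedBall.trans (Set.Subset.trans ?_ hδO)
    exact closedBall_subset_ball' (by rw [dist_comm]; linarith [min_le_left (δ / 2) (ε / 2)])
  · exact (diam_ball (by positivity)).trans (by linarith [min_le_right (δ / 2) (ε / 2)])

theorem IsClosed.existsUnique_forall_mem_of_closure_subset {X : Type*} [MetricSpace X]
    [CompleteSpace X] {K : Set X} (hK : IsClosed K) {V : ℕ → Set X}
    (hbdd : ∀ k, IsBounded (V k)) (hnest : ∀ k, closure (V (k + 1)) ⊆ V k)
    (hdiam : Tendsto (fun k => diam (V k)) atTop (𝓝 0)) (hmeet : ∀ k, (K ∩ V k).Nonempty) :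
    ∃! z, z ∈ K ∧ ∀ k, z ∈ V k := by
  have hanti : Antitone V := antitone_nat_of_succ_le fun k => subset_closure.trans (hnest k)
  obtain ⟨z, hz⟩ : (⋂ k, K ∩ closure (V k)).Nonempty := by
    refine nonempty_iInter_of_nonempty_biInter (fun k => hK.inter isClosed_closure)
      (fun k => (hbdd k).closure.subset Set.inter_subset_right) (fun N => ?_) ?_
    · obtain ⟨x, hxK, hxV⟩ := hmeet N
      exact ⟨x, Set.mem_iInter₂.2 fun k hk => ⟨hxK, subset_closure (hanti hk hxV)⟩⟩
    · refine squeeze_zero (fun _ => diam_nonneg) (fun k => ?_) hdiam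
      exact (diam_mono Set.inter_subset_right (hbdd k).closure).trans (diam_closure _).le
  have hz : ∀ k, z ∈ K ∩ closure (V k) := Set.mem_iInter.1 hz
  refine ⟨z, ⟨(hz 0).1, fun k => hnest k (hz (k + 1)).2⟩, fun w ⟨_, hw⟩ => ?_⟩
  refine dist_le_zero.1 (ge_of_tendsto' hdiam fun k => dist_le_diam_of_mem (hbdd k) (hw k) ?_)
  exact hnest k (hz (k + 1)).2

theorem Equivalence.exists_measurableSet_existsUnique {X : Type*} [MetricSpace X]
    [SeparableSpace X] [CompleteSpace X] [MeasurableSpace X] [OpensMeasurableSpace X]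
    {R : X → X → Prop} (hR : Equivalence R) (hclosed : ∀ x, IsClosed {y | R x y})
    (hsat : ∀ U : Set X, IsOpen U → MeasurableSet {x | ∃ u ∈ U, R u x}) :
    ∃ S : Set X, MeasurableSet S ∧ ∀ x, ∃! y, y ∈ S ∧ R x y := by
  obtain ⟨B, hBo, hBb, hB⟩ := exists_nat_basis_closure_subset_diam_le X
  set A : ℕ → Set X := fun n => {x | ∃ u ∈ B n, R u x}
  set N := greedySeq (fun k m n => closure (B n) ⊆ B m ∧ diam (B n) ≤ (1 / 2) ^ k) A
  have hA : ∀ {x y}, R x y → ∀ n, x ∈ A n ↔ y ∈ A n := fun hxy n =>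
    ⟨fun ⟨u, hu, hux⟩ => ⟨u, hu, hR.trans hux hxy⟩,
      fun ⟨u, hu, huy⟩ => ⟨u, hu, hR.trans huy (hR.symm hxy)⟩⟩
  have h₀ : ∀ x, ∃ n, x ∈ A n := fun x => by
    obtain ⟨n, hn, -⟩ := hB x _ isOpen_univ (Set.mem_univ x) 1 one_pos
    exact ⟨n, x, hn, hR.refl x⟩
  have hstep : ∀ x k m, x ∈ A m → ∃ n, (closure (B n) ⊆ B m ∧ diam (B n) ≤ (1 / 2) ^ k) ∧
      x ∈ A n := fun x k m ⟨u, hu, hux⟩ => by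
    obtain ⟨n, hun, hcl, hdiam⟩ := hB u _ (hBo m) hu ((1 / 2) ^ k) (by positivity)
    exact ⟨n, ⟨hcl, hdiam⟩, u, hun, hux⟩
  refine ⟨{x | ∀ k, x ∈ B (N x k)}, ?_, fun x => ?_⟩
  · exact Measurable.setOf <| .forall fun k => measurable_mem_apply
      (measurable_greedySeq (fun n => hsat _ (hBo n)) k) fun n => (hBo n).measurableSet
  have hdiam : Tendsto (fun k => diam (B (N x k))) atTop (𝓝 0) := by
    refine (tendsto_add_atTop_iff_nat 1).1 (squeeze_zero (fun _ => diam_nonneg)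
      (fun k => (greedySeq_succ (h₀ x) (hstep x) k).2) ?_)
    exact tendsto_pow_atTop_nhds_zero_of_lt_one (by norm_num) (by norm_num)
  have hmeet : ∀ k, ({y | R x y} ∩ B (N x k)).Nonempty := fun k => by
    obtain ⟨u, hu, hux⟩ := mem_greedySeq (h₀ x) (hstep x) k
    exact ⟨u, hR.symm hux, hu⟩
  obtain ⟨z, ⟨hxz, hz⟩, huniq⟩ := (hclosed x).existsUnique_forall_mem_of_closure_subset
    (fun _ => hBb _) (fun k => (greedySeq_succ (h₀ x) (hstep x) k).1) hdiam hmeet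
  refine ⟨z, ⟨?_, hxz⟩, fun w ⟨hw, hxw⟩ => huniq w ⟨hxw, ?_⟩⟩
  · simpa only [Set.mem_ofPred_eq, N, greedySeq_congr (hA hxz)] using hz
  · simpa only [Set.mem_ofPred_eq, N, greedySeq_congr (hA hxw)] using hw

/-- **Takesaki selection theorem (Borel version).** Let `R` be an equivalence relation
on a Polish space `X` such that every equivalence class is closed and the
`R`-saturation of every open set is Borel. Then there is a Borel subset of `X` meeting
every equivalence class in exactly one point. -/
theorem takesaki_selection_borel
    {X : Type*} [TopologicalSpace X] [PolishSpace X] [MeasurableSpace X] [BorelSpace X]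
    (R : X → X → Prop) (hR : Equivalence R)
    (hclosed : ∀ x : X, IsClosed {y : X | R x y})
    (hsat : ∀ U : Set X, IsOpen U → MeasurableSet {x : X | ∃ u ∈ U, R u x}) :
    ∃ S : Set X, MeasurableSet S ∧ ∀ x : X, ∃! y : X, y ∈ S ∧ R x y := by
  let _ := upgradeIsCompletelyMetrizable X
  exact hR.exists_measurableSet_existsUnique hclosed hsat
end

section
/- (Takesaki selection theorem, open version) Let R be an equivalence relation on a Polish space X such that every equivalence class is a closed subset of X, and such that the R-saturation of every open subset of X is open. Then there exists a subset Q of X which, with the subspace topology, is a Polish space and which meets every equivalence class in exactly one point. -/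
/-!
Fix a complete metric and a dense sequence `u`. To a nonempty set `C` attach a greedy
address: at step `n` take the least `k` such that the ball `B(u k, 2⁻ⁿ)` still meets `C`
inside the intersection of the balls chosen so far. The closures of these nested cells shrink
to a single point, which lies in `C` when `C` is closed; the transversal consists of the points
`x` that are this point for their own class. Whether the address of the class of `x` begins
with a given word is decided by finitely many conditions "the class of `x` meets an open set",
which are open because saturations of open sets are open. So each set of points whose `n`-th
address is not a given word `w` is a union of an open and a closed set, and the transversal is
the `Gδ` set `⋂ n w, {address ≠ w} ∪ closure (cell w)`. Finally, `Gδ` subsets of Polish spaces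
are Polish.
-/

open Set Filter Topology Metric

section GδPolish

variable {X : Type*} [TopologicalSpace X] [PolishSpace X]

/-- The diagonal embeds `⋂ n, U n` as a closed subset of the Polish space `Π n, U n`. -/
theorem polishSpace_iInter_of_isOpen {U : ℕ → Set X} (hU : ∀ n, IsOpen (U n)) :
    PolishSpace (⋂ n, U n : Set X) := by
  have := fun n => (hU n).polishSpace
  let g : (⋂ n, U n : Set X) → Π n, U n := fun x n => ⟨x, mem_iInter.1 x.2 n⟩
  have hg : Continuous g := continuous_pi fun n => continuous_subtype_val.subtype_mk _
  have hind : IsInducing g := IsInducing.of_comp hg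
    (continuous_subtype_val.comp (continuous_apply 0)) IsInducing.subtypeVal
  have hrange : range g = {f | ∀ n, (f n : X) = f 0} := by
    refine Subset.antisymm (range_subset_iff.2 fun x n => rfl) fun f hf => ?_
    exact ⟨⟨f 0, mem_iInter.2 fun n => hf n ▸ (f n).2⟩,
      funext fun n => Subtype.ext (hf n).symm⟩
  have hclosed : IsClosed (range g) := by
    rw [hrange, ofPred_forall]
    exact isClosed_iInter fun n => isClosed_eq (by fun_prop) (by fun_prop)
  exact IsClosedEmbedding.polishSpace
    ⟨⟨hind, fun x y hxy => Subtype.ext (congrArg (fun f => (f 0 : X)) hxy)⟩, hclosed⟩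

theorem IsGδ.polishSpace {s : Set X} (hs : IsGδ s) : PolishSpace s := by
  obtain ⟨U, hU, rfl⟩ := isGδ_iff_eq_iInter_nat.1 hs
  exact polishSpace_iInter_of_isOpen hU

end GδPolish

theorem isGδ_setOf_mem_of_isGδ_fiber_compl {X α : Type*} [TopologicalSpace X] [Countable α]
    {f : X → α} {F : α → Set X} (hf : ∀ a, IsGδ {x | f x ≠ a}) (hF : ∀ a, IsGδ (F a)) :
    IsGδ {x | x ∈ F (f x)} := by
  have : {x | x ∈ F (f x)} = ⋂ a, {x | f x ≠ a} ∪ F a := by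
    ext x
    simp only [mem_ofPred_eq, mem_iInter, mem_union]
    exact ⟨fun hx a => (eq_or_ne (f x) a).symm.imp_right fun (h : f x = a) => h ▸ hx,
      fun h => (h (f x)).resolve_left (· rfl)⟩
  rw [this]
  exact IsGδ.iInter fun a => (hf a).union (hF a)

namespace GreedyAddress

variable {X : Type*} [MetricSpace X] (u : ℕ → X)

/-- Words are read newest letter first: in `cell u (k :: h)` the ball around `u k` has
radius `2⁻ᵐ` with `m = h.length`. -/
def cell : List ℕ → Set X
  | [] => univ
  | k :: h => cell h ∩ ball (u k) ((1 / 2) ^ h.length)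

theorem isOpen_cell : ∀ h, IsOpen (cell u h)
  | [] => isOpen_univ
  | _ :: h => (isOpen_cell h).inter isOpen_ball

theorem isBounded_cell_cons (k : ℕ) (h : List ℕ) : Bornology.IsBounded (cell u (k :: h)) :=
  isBounded_ball.subset inter_subset_right

theorem diam_cell_cons_le (k : ℕ) (h : List ℕ) :
    diam (cell u (k :: h)) ≤ 2 * (1 / 2) ^ h.length :=
  (diam_mono inter_subset_right isBounded_ball).trans (diam_ball (by positivity))

theorem exists_inter_cell_cons_nonempty (hu : DenseRange u) {C : Set X} {h : List ℕ}
    (hC : (C ∩ cell u h).Nonempty) : ∃ k, (C ∩ cell u (k :: h)).Nonempty := by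
  obtain ⟨x, hxC, hxh⟩ := hC
  obtain ⟨k, hk⟩ := hu.exists_dist_lt x (by positivity : (0 : ℝ) < (1 / 2) ^ h.length)
  exact ⟨k, x, hxC, hxh, mem_ball.2 (dist_comm x (u k) ▸ hk)⟩

noncomputable def address (C : Set X) : ℕ → List ℕ
  | 0 => []
  | n + 1 => sInf {k | (C ∩ cell u (k :: address C n)).Nonempty} :: address C n

variable {u} {C : Set X}

theorem length_address (n : ℕ) : (address u C n).length = n := by
  induction n with
  | zero => rfl
  | succ n ih => simp [address, ih]

theorem antitone_cell_address : Antitone fun n => cell u (address u C n) :=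
  antitone_nat_of_succ_le fun _ => inter_subset_left

theorem tendsto_diam_closure_cell_address :
    Tendsto (fun n => diam (closure (cell u (address u C (n + 1))))) atTop (𝓝 0) := by
  have hle : ∀ n, diam (closure (cell u (address u C (n + 1)))) ≤ 2 * (1 / 2) ^ n := fun n => by
    have h := diam_cell_cons_le u (sInf {k | (C ∩ cell u (k :: address u C n)).Nonempty})
      (address u C n)
    rwa [length_address, ← diam_closure] at h
  refine squeeze_zero (fun n => diam_nonneg) hle ?_
  simpa using (tendsto_pow_atTop_nhds_zero_of_lt_one (by norm_num : (0 : ℝ) ≤ 1 / 2)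
    (by norm_num)).const_mul 2

theorem eq_of_forall_mem_closure_cell_address {x y : X}
    (hx : ∀ n, x ∈ closure (cell u (address u C n)))
    (hy : ∀ n, y ∈ closure (cell u (address u C n))) : x = y := by
  refine dist_le_zero.1
    (ge_of_tendsto' (tendsto_diam_closure_cell_address (u := u) (C := C)) fun n => ?_)
  exact dist_le_diam_of_mem (isBounded_cell_cons u _ _).closure (hx _) (hy _)

theorem inter_cell_address_nonempty (hu : DenseRange u) (hC : C.Nonempty) :
    ∀ n, (C ∩ cell u (address u C n)).Nonempty
  | 0 => by simpa [address, cell] using hC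
  | n + 1 =>
    Nat.sInf_mem (exists_inter_cell_cons_nonempty u hu (inter_cell_address_nonempty hu hC n))

theorem address_succ_eq_cons_iff (hu : DenseRange u) (hC : C.Nonempty) {n k : ℕ} {h : List ℕ} :
    address u C (n + 1) = k :: h ↔ address u C n = h ∧ (C ∩ cell u (k :: h)).Nonempty ∧
      ∀ j < k, ¬(C ∩ cell u (j :: h)).Nonempty := by
  rw [address, List.cons.injEq, and_comm]
  refine and_congr_right fun hn => ?_
  subst hn
  have hS : {j | (C ∩ cell u (j :: address u C n)).Nonempty}.Nonempty :=
    exists_inter_cell_cons_nonempty u hu (inter_cell_address_nonempty hu hC n)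
  rw [Nat.sInf_def hS]
  classical
  exact Nat.find_eq_iff hS

theorem existsUnique_mem_forall_mem_closure_cell_address [CompleteSpace X] (hu : DenseRange u)
    (hC : C.Nonempty) (hCc : IsClosed C) :
    ∃! y, y ∈ C ∧ ∀ n, y ∈ closure (cell u (address u C n)) := by
  have hbdd : ∀ n, Bornology.IsBounded (closure (cell u (address u C (n + 1)))) :=
    fun n => (isBounded_cell_cons u _ _).closure
  have hne : (⋂ n, C ∩ closure (cell u (address u C (n + 1)))).Nonempty := by
    refine nonempty_iInter_of_nonempty_biInter (fun n => hCc.inter isClosed_closure)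
      (fun n => (hbdd n).subset inter_subset_right) (fun N => ?_)
      (squeeze_zero (fun n => diam_nonneg) (fun n => diam_mono inter_subset_right (hbdd n))
        tendsto_diam_closure_cell_address)
    obtain ⟨z, hzC, hz⟩ := inter_cell_address_nonempty hu hC (N + 1)
    exact ⟨z, mem_iInter₂.2 fun n hn =>
      ⟨hzC, subset_closure (antitone_cell_address (by omega) hz)⟩⟩
  obtain ⟨y, hy⟩ := hne
  have hy := mem_iInter.1 hy
  have hy_cells : ∀ n, y ∈ closure (cell u (address u C n)) :=
    fun n => closure_mono (antitone_cell_address n.le_succ) (hy n).2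
  exact ⟨y, ⟨(hy 0).1, hy_cells⟩,
    fun z hz => eq_of_forall_mem_closure_cell_address hz.2 hy_cells⟩

theorem isGδ_setOf_address_ne (hu : DenseRange u) {C : X → Set X} (hne : ∀ x, (C x).Nonempty)
    (hopen : ∀ U, IsOpen U → IsOpen {x | (C x ∩ U).Nonempty}) :
    ∀ n l, IsGδ {x | address u (C x) n ≠ l}
  | 0, l => by by_cases hl : [] = l <;> simp [address, hl, IsGδ.empty, IsGδ.univ]
  | n + 1, [] => by simp [address, IsGδ.univ]
  | n + 1, k :: h => by
    have hO : ∀ j, IsOpen {x | (C x ∩ cell u (j :: h)).Nonempty} :=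
      fun j => hopen _ (isOpen_cell u _)
    have : {x | address u (C x) (n + 1) ≠ k :: h} = {x | address u (C x) n ≠ h} ∪
        {x | (C x ∩ cell u (k :: h)).Nonempty}ᶜ ∪
        ⋃ j < k, {x | (C x ∩ cell u (j :: h)).Nonempty} := by
      ext x
      simp only [mem_ofPred_eq, ne_eq, address_succ_eq_cons_iff hu (hne x), mem_union,
        mem_compl_iff, mem_iUnion, not_and_or, not_forall, not_not, exists_prop, or_assoc]
    rw [this]
    exact ((isGδ_setOf_address_ne hu hne hopen n h).union (hO k).isClosed_compl.isGδ).union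
      (isOpen_biUnion fun j _ => hO j).isGδ

theorem isGδ_setOf_forall_mem_closure_cell_address (hu : DenseRange u) {C : X → Set X}
    (hne : ∀ x, (C x).Nonempty) (hopen : ∀ U, IsOpen U → IsOpen {x | (C x ∩ U).Nonempty}) :
    IsGδ {x | ∀ n, x ∈ closure (cell u (address u (C x) n))} := by
  rw [ofPred_forall]
  exact IsGδ.iInter fun n => isGδ_setOf_mem_of_isGδ_fiber_compl
    (F := fun l => closure (cell u l)) (isGδ_setOf_address_ne hu hne hopen n)
    fun _ => isClosed_closure.isGδ

end GreedyAddress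

open GreedyAddress in
/-- **Takesaki selection theorem (open version).** Let `R` be an equivalence relation
on a Polish space `X` such that every equivalence class is closed and the
`R`-saturation of every open set is open. Then there is a subset `Q` of `X` which is a
Polish space with the subspace topology and which meets every equivalence class in
exactly one point. -/
theorem takesaki_selection_polish
    {X : Type*} [TopologicalSpace X] [PolishSpace X]
    (R : X → X → Prop) (hR : Equivalence R)
    (hclosed : ∀ x : X, IsClosed {y : X | R x y})
    (hsat : ∀ U : Set X, IsOpen U → IsOpen {x : X | ∃ u ∈ U, R u x}) :
    ∃ Q : Set X, PolishSpace Q ∧ ∀ x : X, ∃! y : X, y ∈ Q ∧ R x y := by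
  rcases isEmpty_or_nonempty X with hX | hX
  · exact ⟨∅, isClosed_empty.polishSpace, isEmptyElim⟩
  let := TopologicalSpace.upgradeIsCompletelyMetrizable X
  have hu := TopologicalSpace.denseRange_denseSeq X
  have hclass : ∀ {x y}, R x y → R y = R x := fun hxy =>
    funext fun z => propext ⟨hR.trans hxy, hR.trans (hR.symm hxy)⟩
  have hsat' : ∀ U, IsOpen U → IsOpen {x | ({y | R x y} ∩ U).Nonempty} := fun U hU => by
    convert hsat U hU using 1
    ext x
    exact ⟨fun ⟨y, hxy, hy⟩ => ⟨y, hy, hR.symm hxy⟩,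
      fun ⟨y, hy, hyx⟩ => ⟨y, hR.symm hyx, hy⟩⟩
  refine ⟨_, (isGδ_setOf_forall_mem_closure_cell_address hu (fun x => ⟨x, hR.refl x⟩)
    hsat').polishSpace, fun x => ?_⟩
  refine (existsUnique_congr fun y => ?_).2
    (existsUnique_mem_forall_mem_closure_cell_address hu ⟨x, hR.refl x⟩ (hclosed x))
  refine ⟨fun ⟨hy, hxy⟩ => ⟨hxy, ?_⟩, fun ⟨hxy, hy⟩ => ⟨?_, hxy⟩⟩
  · simpa only [mem_ofPred_eq, hclass hxy] using hy
  · simpa only [mem_ofPred_eq, hclass hxy] using hy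
end
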